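/- Let R be a commutative noetherian ring, S a flat R-algebra, and N an R-module with Ext_R^n(S,N) = 0 for all n > 0. If E is an injective resolution of N over R, then the complex Hom_R(S,E) is an injective resolution of the R-module Hom_R(S,N); that is, Hom_R(S,E) is a complex of injective R-modules whose homology is Hom_R(S,N) concentrated in degree zero. -/

import Mathlib

/-!
Common definitions: `extmod R M N n` is the `n`-th Ext module `Ext_R^n(M,N)`.
-/

open CategoryTheory

universe u

/-- `Ext_R^n(M,N)`, the `n`-th Ext of the `R`-modules `M` and `N`, as an object of
`ModuleCat R`. -/
noncomputable def extmod (R : Type u) [CommRing R] (M N : Type u) [AddCommGroup M] [Module R M]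
    [AddCommGroup N] [Module R N] (n : ℕ) : ModuleCat.{u} R :=
  ((Ext R (ModuleCat.{u} R) n).obj (Opposite.op (ModuleCat.of R M))).obj (ModuleCat.of R N)


/-- The cochain complex `Hom_R(M, E)` obtained by applying the functor `Hom_R(M, -)`
degreewise to a `ℕ`-indexed cochain complex `E` of `R`-modules. -/
noncomputable def homCocomplex {R : Type u} [CommRing R] (M : ModuleCat.{u} R)
    (E : CochainComplex (ModuleCat.{u} R) ℕ) : CochainComplex (ModuleCat.{u} R) ℕ :=
  (((linearCoyoneda R (ModuleCat.{u} R)).obj (Opposite.op M)).mapHomologicalComplex _).obj E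

section aux
variable {R : Type u} [CommRing R]

lemma zz_stepDown {P A B C : ModuleCat.{u} R} [Projective P]
    (f : A ⟶ B) (g : B ⟶ C) (u : P ⟶ B)
    (hexact : ∀ b : B, g b = 0 → ∃ a : A, f a = b) (hu : u ≫ g = 0) :
    ∃ t : P ⟶ A, t ≫ f = u := by
  have hmem : ∀ x : P, u x ∈ LinearMap.range f.hom := by
    intro x
    have h0 : g (u x) = 0 := LinearMap.congr_fun (congrArg ModuleCat.Hom.hom hu) x
    obtain ⟨a, ha⟩ := hexact (u x) h0
    exact ⟨a, ha⟩
  let u' : P ⟶ ModuleCat.of R (LinearMap.range f.hom) :=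
    ModuleCat.ofHom (LinearMap.codRestrict _ u.hom hmem)
  let f' : A ⟶ ModuleCat.of R (LinearMap.range f.hom) :=
    ModuleCat.ofHom (LinearMap.rangeRestrict f.hom)
  have : Epi f' := by
    rw [ModuleCat.epi_iff_surjective]
    exact LinearMap.surjective_rangeRestrict _
  refine ⟨Projective.factorThru u' f', ?_⟩
  have h := Projective.factorThru_comp u' f'
  ext x
  have h2 := LinearMap.congr_fun (congrArg ModuleCat.Hom.hom h) x
  exact congrArg Subtype.val h2

lemma zz_monoFactor {X A B : ModuleCat.{u} R} (f : A ⟶ B) (hf : Function.Injective f)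
    (u : X ⟶ B) (h : ∀ x : X, ∃ a : A, f a = u x) :
    ∃ w : X ⟶ A, w ≫ f = u := by
  have hmem : ∀ x : X, u x ∈ LinearMap.range f.hom := fun x => h x
  let e := LinearEquiv.ofInjective f.hom hf
  refine ⟨ModuleCat.ofHom (e.symm.toLinearMap ∘ₗ LinearMap.codRestrict _ u.hom hmem),
    ?_⟩
  ext x
  show f.hom (e.symm ⟨u x, hmem x⟩) = u x
  rw [← LinearEquiv.ofInjective_apply f.hom (h := hf)]
  exact congrArg Subtype.val (e.apply_symm_apply ⟨u x, hmem x⟩)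

lemma zz_stepUp {B C Q : ModuleCat.{u} R} [Injective Q]
    (g : B ⟶ C) (u : B ⟶ Q) (hker : ∀ b : B, g b = 0 → u b = 0) :
    ∃ v : C ⟶ Q, g ≫ v = u := by
  let gl : B →ₗ[R] C := g.hom
  let w0 : (B ⧸ LinearMap.ker gl) →ₗ[R] Q :=
    Submodule.liftQ _ u.hom (fun b hb => hker b hb)
  let w : ModuleCat.of R (LinearMap.range gl) ⟶ Q :=
    ModuleCat.ofHom (w0 ∘ₗ (LinearMap.quotKerEquivRange gl).symm.toLinearMap)
  let i : ModuleCat.of R (LinearMap.range gl) ⟶ C := ModuleCat.ofHom (LinearMap.range gl).subtype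
  have : Mono i := by
    rw [ModuleCat.mono_iff_injective]
    exact Subtype.val_injective
  refine ⟨Injective.factorThru w i, ?_⟩
  ext b
  have hcomm := Injective.comp_factorThru w i
  have h2 := LinearMap.congr_fun (congrArg ModuleCat.Hom.hom hcomm) (⟨gl b, ⟨b, rfl⟩⟩ : LinearMap.range gl)
  show (Injective.factorThru w i) (g b) = u b
  have h3 : (Injective.factorThru w i) (g b) = w ⟨gl b, ⟨b, rfl⟩⟩ := h2
  rw [h3]
  show w0 ((LinearMap.quotKerEquivRange gl).symm ⟨gl b, ⟨b, rfl⟩⟩) = u b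
  have hsym : (LinearMap.quotKerEquivRange gl).symm ⟨gl b, ⟨b, rfl⟩⟩ =
      Submodule.Quotient.mk b := by
    apply (LinearMap.quotKerEquivRange gl).injective
    rw [LinearEquiv.apply_symm_apply]
    ext
    simp [LinearMap.quotKerEquivRange_apply_mk]
  rw [hsym]
  exact Submodule.liftQ_apply _ _ _

lemma zz_homInjective (S : Type u) [CommRing S] [Algebra R S] [Module.Flat R S]
    (E : Type u) [AddCommGroup E] [Module R E] [Injective (ModuleCat.of R E)] :
    Injective (ModuleCat.of R (S →ₗ[R] E)) := by
  have hE : Module.Injective R E := Module.injective_module_of_injective_object R E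
  have baer : Module.Baer R (S →ₗ[R] E) := by
    intro J gJ
    let ψ : (TensorProduct R J S) →ₗ[R] E := TensorProduct.lift gJ
    let ι : (TensorProduct R J S) →ₗ[R] S :=
      (TensorProduct.lid R S).toLinearMap ∘ₗ LinearMap.rTensor S J.subtype
    have hι : Function.Injective ι := by
      apply (TensorProduct.lid R S).injective.comp
      exact Module.Flat.rTensor_preserves_injective_linearMap J.subtype Subtype.val_injective
    obtain ⟨h, hh⟩ := hE.out ι hι ψ
    refine ⟨LinearMap.toSpanSingleton R (S →ₗ[R] E) h, ?_⟩
    intro x mem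
    ext s
    have hι' : ι (⟨x, mem⟩ ⊗ₜ[R] s) = x • s := by
      simp [ι, LinearMap.rTensor_tmul]
    have := hh (⟨x, mem⟩ ⊗ₜ[R] s)
    rw [hι'] at this
    show x • (h s) = gJ ⟨x, mem⟩ s
    rw [← map_smul h, this]
    simp [ψ]
  exact Module.injective_object_of_injective_module (inj := baer.injective)

end aux

/-- Let `R` be a commutative noetherian ring, `S` a flat (commutative) `R`-algebra, and
`N` an `R`-module with `Ext_R^n(S,N) = 0` for all `n > 0`.  If `E` is an injective
resolution of `N` over `R`, then the complex `Hom_R(S,E)` is an injective resolution of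
the `R`-module `Hom_R(S,N)`: it is a complex of injective `R`-modules whose homology
vanishes in every degree `n ≠ 0` and in degree zero is isomorphic to `Hom_R(S,N)`. -/
theorem homS_injectiveResolution
    (R : Type u) [CommRing R] [IsNoetherianRing R]
    (S : Type u) [CommRing S] [Algebra R S] [Module.Flat R S]
    (N : Type u) [AddCommGroup N] [Module R N]
    (hext : ∀ n : ℕ, 0 < n → Subsingleton (extmod R S N n))
    (E : InjectiveResolution (ModuleCat.of R N)) :
    (∀ n : ℕ, Injective ((homCocomplex (ModuleCat.of R S) E.cocomplex).X n)) ∧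
    (∀ n : ℕ, n ≠ 0 →
      Limits.IsZero ((homCocomplex (ModuleCat.of R S) E.cocomplex).homology n)) ∧
    Nonempty ((homCocomplex (ModuleCat.of R S) E.cocomplex).homology 0 ≅
      ModuleCat.of R (S →ₗ[R] N)) := by
  classical
  set K := homCocomplex (ModuleCat.of R S) E.cocomplex with hK
  -- Part 1 : injectivity
  have part1 : ∀ n : ℕ, Injective (K.X n) := by
    intro n
    letI : Injective (ModuleCat.of R ((E.cocomplex.X n) : Type u)) := E.injective n
    exact Injective.of_iso (ModuleCat.homLinearEquiv (S := R)).toModuleIso.symm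
      (zz_homInjective (R := R) S (E.cocomplex.X n))
  -- concrete facts about E
  let j : ModuleCat.of R N ⟶ E.cocomplex.X 0 :=
    (HomologicalComplex.singleObjXSelf (ComplexShape.up ℕ) 0 (ModuleCat.of R N)).inv ≫ E.ι.f 0
  have hj_inj : Function.Injective j := by
    have : Mono j := mono_comp _ _
    exact (ModuleCat.mono_iff_injective j).1 this
  have hjd : j ≫ E.cocomplex.d 0 1 = 0 := by
    simp only [j, Category.assoc, InjectiveResolution.ι_f_zero_comp_complex_d, Limits.comp_zero]
  have hker0 : ∀ x : E.cocomplex.X 0, E.cocomplex.d 0 1 x = 0 → ∃ y : N, j y = x := by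
    intro x hx
    have hex := E.exact₀
    rw [ShortComplex.moduleCat_exact_iff] at hex
    obtain ⟨y0, hy0⟩ := hex x hx
    refine ⟨(HomologicalComplex.singleObjXSelf (ComplexShape.up ℕ) 0 (ModuleCat.of R N)).hom y0,
      ?_⟩
    show (E.ι.f 0) (((HomologicalComplex.singleObjXSelf (ComplexShape.up ℕ) 0
      (ModuleCat.of R N)).hom ≫ (HomologicalComplex.singleObjXSelf (ComplexShape.up ℕ) 0
      (ModuleCat.of R N)).inv) y0) = x
    rw [Iso.hom_inv_id]
    exact hy0
  have hexactE : ∀ q : ℕ, ∀ x : E.cocomplex.X (q + 1), E.cocomplex.d (q+1) (q+2) x = 0 →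
      ∃ y : E.cocomplex.X q, E.cocomplex.d q (q+1) y = x := by
    intro q x hx
    have hex := E.exact_succ q
    rw [ShortComplex.moduleCat_exact_iff] at hex
    exact hex x hx
  -- choose a projective resolution of S
  let P : ProjectiveResolution (ModuleCat.of R S) := ProjectiveResolution.of (ModuleCat.of R S)
  let ε : P.complex.X 0 ⟶ ModuleCat.of R S :=
    P.π.f 0 ≫ (HomologicalComplex.singleObjXSelf (ComplexShape.down ℕ) 0 (ModuleCat.of R S)).hom
  have hδε : P.complex.d 1 0 ≫ ε = 0 := by
    simp only [ε, ← Category.assoc, ProjectiveResolution.complex_d_comp_π_f_zero, Limits.zero_comp]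
  have hker_ε : ∀ x : P.complex.X 0, ε x = 0 →
      ∃ y : P.complex.X 1, P.complex.d 1 0 y = x := by
    intro x hx
    have hex := P.exact₀
    rw [ShortComplex.moduleCat_exact_iff] at hex
    refine hex x ?_
    have : Function.Injective ((HomologicalComplex.singleObjXSelf (ComplexShape.down ℕ) 0
        (ModuleCat.of R S)).hom) := by
      rw [← ModuleCat.mono_iff_injective]
      infer_instance
    apply this
    rw [map_zero]
    exact hx
  have hexactP : ∀ q : ℕ, ∀ x : P.complex.X (q + 1), P.complex.d (q+1) q x = 0 →
      ∃ y : P.complex.X (q+2), P.complex.d (q+2) (q+1) y = x := by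
    intro q x hx
    have hex := P.exact_succ q
    rw [ShortComplex.moduleCat_exact_iff] at hex
    exact hex x hx
  have hepi_ε : Epi ε := epi_comp _ _
  -- translate the Ext hypothesis
  have hExt : ∀ q : ℕ, ∀ w : P.complex.X (q+1) ⟶ ModuleCat.of R N,
      P.complex.d (q+2) (q+1) ≫ w = 0 →
      ∃ v : P.complex.X q ⟶ ModuleCat.of R N, P.complex.d (q+1) q ≫ v = w := by
    intro q w hw
    have h1 : Limits.IsZero (extmod R S N (q+1)) :=
      @ModuleCat.isZero_of_subsingleton _ _ _ (hext (q+1) (Nat.succ_pos q))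
    have h2 : Limits.IsZero ((P.complex.linearYonedaObj R (ModuleCat.of R N)).homology (q+1)) :=
      Limits.IsZero.of_iso h1 (P.isoExt (q+1) (ModuleCat.of R N)).symm
    have h3 : (P.complex.linearYonedaObj R (ModuleCat.of R N)).ExactAt (q+1) :=
      (HomologicalComplex.exactAt_iff_isZero_homology _ _).2 h2
    rw [HomologicalComplex.exactAt_iff' _ q (q+1) (q+2)
      (by simp [CochainComplex.prev_nat_succ]) (by simp [CochainComplex.next])] at h3
    rw [ShortComplex.moduleCat_exact_iff] at h3
    obtain ⟨v, hv⟩ := h3 w (by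
      show (P.complex.linearYonedaObj R (ModuleCat.of R N)).d (q+1) (q+2) w = 0
      rw [ChainComplex.linearYonedaObj_d]
      exact hw)
    exact ⟨v, hv⟩
  -- the key lifting lemma
  have key : ∀ m : ℕ, ∀ φ : ModuleCat.of R S ⟶ E.cocomplex.X (m+1),
      φ ≫ E.cocomplex.d (m+1) (m+2) = 0 →
      ∃ ψ : ModuleCat.of R S ⟶ E.cocomplex.X m, ψ ≫ E.cocomplex.d m (m+1) = φ := by
    intro m φ hφ
    -- the descending construction of the comparison maps
    have down : ∀ k : ℕ, ∃ t : (∀ i : ℕ, (P.complex.X i ⟶ E.cocomplex.X (m - i))),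
        (t 0 ≫ E.cocomplex.d m (m+1) = ε ≫ φ) ∧
        (∀ i : ℕ, i + 1 ≤ k → i + 1 ≤ m →
          t (i+1) ≫ E.cocomplex.d (m - (i+1)) (m - i) = P.complex.d (i+1) i ≫ t i) := by
      intro k
      induction k with
      | zero =>
        obtain ⟨t0, ht0⟩ := zz_stepDown (E.cocomplex.d m (m+1)) (E.cocomplex.d (m+1) (m+2))
          (ε ≫ φ) (hexactE m) (by rw [Category.assoc, hφ, Limits.comp_zero])
        refine ⟨fun i => Nat.rec (motive := fun i => P.complex.X i ⟶ E.cocomplex.X (m - i))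
          t0 (fun _ _ => 0) i, ht0, ?_⟩
        intro i hi _
        exact absurd hi (by omega)
      | succ k ih =>
        obtain ⟨t, hb, hr⟩ := ih
        by_cases hk : k + 1 ≤ m
        · -- extend the sequence at position k+1
          have hu : (P.complex.d (k+1) k ≫ t k) ≫ E.cocomplex.d (m-k) (m-k+1) = 0 := by
            cases k with
            | zero =>
              rw [Category.assoc]
              have : t 0 ≫ E.cocomplex.d (m-0) (m-0+1) = ε ≫ φ := hb
              rw [this, ← Category.assoc, hδε, Limits.zero_comp]
            | succ i =>
              rw [show m - (i+1) + 1 = m - i from by omega]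
              rw [Category.assoc, hr i (by omega) (by omega), ← Category.assoc,
                HomologicalComplex.d_comp_d, Limits.zero_comp]
          have hex : ∀ b : E.cocomplex.X (m - k), E.cocomplex.d (m-k) (m-k+1) b = 0 →
              ∃ a : E.cocomplex.X (m-(k+1)), E.cocomplex.d (m-(k+1)) (m-k) a = b := by
            have h1 : m - (k+1) + 1 = m - k := by omega
            rw [← h1]
            exact hexactE (m - (k+1))
          obtain ⟨tk1, htk1⟩ := zz_stepDown (E.cocomplex.d (m-(k+1)) (m-k))
            (E.cocomplex.d (m-k) (m-k+1)) (P.complex.d (k+1) k ≫ t k) hex hu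
          refine ⟨Function.update t (k+1) tk1, ?_, ?_⟩
          · rw [Function.update_of_ne (by omega : (0:ℕ) ≠ k+1)]
            exact hb
          · intro i hi him
            by_cases hik : i + 1 ≤ k
            · rw [Function.update_of_ne (by omega : i+1 ≠ k+1),
                Function.update_of_ne (by omega : i ≠ k+1)]
              exact hr i hik him
            · have : i = k := by omega
              subst this
              rw [Function.update_self, Function.update_of_ne (by omega : i ≠ i+1)]
              exact htk1
        · refine ⟨t, hb, ?_⟩
          intro i hi him
          exact hr i (by omega) him
    obtain ⟨t, hb, hr⟩ := down m
    -- transported degree-zero facts about E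
    obtain ⟨j', hj'_inj, hj'd, hker0'⟩ :
        ∃ j' : ModuleCat.of R N ⟶ E.cocomplex.X (m - m),
          Function.Injective j' ∧ j' ≫ E.cocomplex.d (m-m) (m-m+1) = 0 ∧
          (∀ x : E.cocomplex.X (m-m), E.cocomplex.d (m-m) (m-m+1) x = 0 → ∃ y : N, j' y = x) := by
      have hgen : ∀ q : ℕ, q = 0 → ∃ j' : ModuleCat.of R N ⟶ E.cocomplex.X q,
          Function.Injective j' ∧ j' ≫ E.cocomplex.d q (q+1) = 0 ∧
          (∀ x : E.cocomplex.X q, E.cocomplex.d q (q+1) x = 0 → ∃ y : N, j' y = x) := by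
        rintro q rfl
        exact ⟨j, hj_inj, hjd, hker0⟩
      exact hgen (m - m) (Nat.sub_self m)
    -- the base case of the ascending correction
    have upBase : ∃ c : P.complex.X m ⟶ E.cocomplex.X (m - m),
        P.complex.d (m+1) m ≫ c = 0 ∧
        c ≫ E.cocomplex.d (m-m) (m-m+1) = t m ≫ E.cocomplex.d (m-m) (m-m+1) := by
      have hud : (P.complex.d (m+1) m ≫ t m) ≫ E.cocomplex.d (m-m) (m-m+1) = 0 := by
        cases m with
        | zero =>
          rw [Category.assoc]
          have : t 0 ≫ E.cocomplex.d (0-0) (0-0+1) = ε ≫ φ := hb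
          rw [this, ← Category.assoc, hδε, Limits.zero_comp]
        | succ m1 =>
          rw [show (m1+1) - (m1+1) + 1 = (m1+1) - m1 from by omega]
          rw [Category.assoc, hr m1 (by omega) (by omega), ← Category.assoc,
            HomologicalComplex.d_comp_d, Limits.zero_comp]
      obtain ⟨w, hw⟩ := zz_monoFactor j' hj'_inj (P.complex.d (m+1) m ≫ t m)
        (fun x => hker0' _ (LinearMap.congr_fun (congrArg ModuleCat.Hom.hom hud) x))
      have hwd : P.complex.d (m+2) (m+1) ≫ w = 0 := by
        haveI : Mono j' := (ModuleCat.mono_iff_injective j').2 hj'_inj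
        rw [← cancel_mono j', Category.assoc, hw, ← Category.assoc,
          HomologicalComplex.d_comp_d, Limits.zero_comp, Limits.zero_comp]
      obtain ⟨v, hv⟩ := hExt m w hwd
      refine ⟨t m - v ≫ j', ?_, ?_⟩
      · rw [Preadditive.comp_sub, ← Category.assoc, hv, hw, sub_self]
      · rw [Preadditive.sub_comp, Category.assoc, hj'd, Limits.comp_zero, sub_zero]
    -- ascending induction
    have up : ∀ dist : ℕ, ∀ k : ℕ, k + dist = m →
        ∃ c : P.complex.X k ⟶ E.cocomplex.X (m - k),
          P.complex.d (k+1) k ≫ c = 0 ∧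
          c ≫ E.cocomplex.d (m-k) (m-k+1) = t k ≫ E.cocomplex.d (m-k) (m-k+1) := by
      intro dist
      induction dist with
      | zero =>
        intro k hk
        have hkm : k = m := by omega
        subst hkm
        exact upBase
      | succ d ih =>
        intro k hk
        obtain ⟨c', hc'1, hc'2⟩ := ih (k+1) (by omega)
        have hker : ∀ b : P.complex.X (k+1), P.complex.d (k+1) k b = 0 → c' b = 0 := by
          intro b hbb
          obtain ⟨y, hy⟩ := hexactP k b hbb
          rw [← hy]
          exact LinearMap.congr_fun (congrArg ModuleCat.Hom.hom hc'1) y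
        obtain ⟨s, hs⟩ := zz_stepUp (P.complex.d (k+1) k) c' hker
        refine ⟨t k - s ≫ E.cocomplex.d (m-(k+1)) (m-k), ?_, ?_⟩
        · rw [Preadditive.comp_sub, ← Category.assoc, hs]
          have h2 : c' ≫ E.cocomplex.d (m-(k+1)) (m-k) = P.complex.d (k+1) k ≫ t k := by
            have h3 := hc'2
            rw [show m - (k+1) + 1 = m - k from by omega] at h3
            rw [h3]
            exact hr k (by omega) (by omega)
          rw [h2, sub_self]
        · rw [Preadditive.sub_comp, Category.assoc, HomologicalComplex.d_comp_d,
            Limits.comp_zero, sub_zero]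
    obtain ⟨c, hc1, hc2⟩ := up m 0 (by omega)
    have h5 : c ≫ E.cocomplex.d m (m+1) = t 0 ≫ E.cocomplex.d m (m+1) := hc2
    rw [hb] at h5
    have hkerc : ∀ b : P.complex.X 0, ε b = 0 → c b = 0 := by
      intro b hbb
      obtain ⟨y, hy⟩ := hker_ε b hbb
      rw [← hy]
      exact LinearMap.congr_fun (congrArg ModuleCat.Hom.hom hc1) y
    obtain ⟨ψ, hψ⟩ := zz_stepUp ε c hkerc
    refine ⟨ψ, ?_⟩
    haveI := hepi_ε
    rw [← cancel_epi ε, ← Category.assoc]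
    rw [show ε ≫ ψ = c from hψ]
    exact h5
  refine ⟨part1, ?_, ?_⟩
  · -- homology vanishing in positive degrees
    intro n hn
    obtain ⟨m, rfl⟩ : ∃ m, n = m + 1 := ⟨n - 1, (Nat.succ_pred_eq_of_pos (Nat.pos_of_ne_zero hn)).symm⟩
    rw [← HomologicalComplex.exactAt_iff_isZero_homology]
    rw [HomologicalComplex.exactAt_iff' _ m (m+1) (m+2)
      (by simp [CochainComplex.prev_nat_succ]) (by simp [CochainComplex.next])]
    rw [ShortComplex.moduleCat_exact_iff]
    intro φ hφ
    obtain ⟨ψ, hψ⟩ := key m φ (by exact hφ)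
    exact ⟨ψ, hψ⟩
  · -- homology in degree 0
    have h1 : (ComplexShape.up ℕ).prev 0 = 0 := CochainComplex.prev_nat_zero
    have h2 : (ComplexShape.up ℕ).next 0 = 1 := CochainComplex.next ℕ 0
    let sc0 := K.sc' 0 0 1
    have isoh : K.homology 0 ≅ sc0.homology :=
      ShortComplex.homologyMapIso (K.isoSc' 0 0 1 h1 h2)
    have hf0 : sc0.f = 0 := K.shape 0 0 (by simp)
    have heqbot : LinearMap.range sc0.moduleCatToCycles = ⊥ := by
      rw [LinearMap.range_eq_bot]
      ext x
      show sc0.f x = 0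
      rw [hf0]
      rfl
    -- the linear map from Hom(S,N) to the cycles
    have hmem : ∀ ν : S →ₗ[R] N,
        (ModuleCat.ofHom (j.hom ∘ₗ ν) : ModuleCat.of R S ⟶ E.cocomplex.X 0) ∈
        LinearMap.ker sc0.g.hom := by
      intro ν
      show (K.d 0 1) (ModuleCat.ofHom (j.hom ∘ₗ ν) : ModuleCat.of R S ⟶ E.cocomplex.X 0) = 0
      show (ModuleCat.ofHom (j.hom ∘ₗ ν) : ModuleCat.of R S ⟶ E.cocomplex.X 0) ≫
        E.cocomplex.d 0 1 = 0
      ext s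
      exact LinearMap.congr_fun (congrArg ModuleCat.Hom.hom hjd) (ν s)
    let q : (S →ₗ[R] N) →ₗ[R] LinearMap.ker sc0.g.hom :=
      LinearMap.codRestrict _ ((ModuleCat.homLinearEquiv (S := R)).symm.toLinearMap ∘ₗ
        (LinearMap.llcomp R S N (E.cocomplex.X 0)) j.hom) hmem
    have hq_inj : Function.Injective q := by
      intro ν ν' hνν
      ext s
      apply hj_inj
      have := congrArg Subtype.val hνν
      exact LinearMap.congr_fun (congrArg ModuleCat.Hom.hom this) s
    have hq_surj : Function.Surjective q := by
      rintro ⟨x, hx⟩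
      let xh : ModuleCat.of R S ⟶ E.cocomplex.X 0 := x
      have hx' : ∀ s : S, (E.cocomplex.d 0 1) (xh s) = 0 := by
        intro s
        have h9 : (xh ≫ E.cocomplex.d 0 1 : ModuleCat.of R S ⟶ E.cocomplex.X 1) = 0 := hx
        exact LinearMap.congr_fun (congrArg ModuleCat.Hom.hom h9) s
      obtain ⟨w, hw⟩ := zz_monoFactor j hj_inj xh (fun s => hker0 _ (hx' s))
      refine ⟨w.hom, ?_⟩
      apply Subtype.ext
      show (ModuleCat.homLinearEquiv (S := R)).symm
        ((LinearMap.llcomp R S N (E.cocomplex.X 0)) j.hom w.hom) = x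
      exact hw
    let e2 : (S →ₗ[R] N) ≃ₗ[R] LinearMap.ker sc0.g.hom := LinearEquiv.ofBijective q ⟨hq_inj, hq_surj⟩
    let e1 : (LinearMap.ker sc0.g.hom ⧸ LinearMap.range sc0.moduleCatToCycles) ≃ₗ[R]
        LinearMap.ker sc0.g.hom := Submodule.quotEquivOfEqBot _ heqbot
    exact ⟨isoh ≪≫ sc0.moduleCatHomologyIso ≪≫ (e1 ≪≫ₗ e2.symm).toModuleIso⟩
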